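/- arXiv:1011.0140 — 2 statements merged into one kernel-verified Lean document; each statement's English description precedes it below -/
import Mathlib

section
/- q-Leibniz formula: let A be an associative k-algebra, a, b in A, q, ζ in k and r ≥ 1. Then [a, b^r]_{q^r} = Σ_{i=0}^{r-1} q^i · binom(r,i)_ζ · b^i · [⋯[[a,b]_q, b]_{qζ} ⋯, b]_{qζ^{r-i-1}}, where the iterated commutator on the right has r - i occurrences of b and binom(r,i)_ζ is the ζ-binomial coefficient. -/
/-- The `q`-commutator `[a,b]_q := a*b - q • (b*a)`. -/
def qComm {k A : Type*} [Field k] [Ring A] [Algebra k A] (q : k) (a b : A) : A :=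
  a * b - q • (b * a)

/-- The Gaussian (`ζ`-)binomial coefficient `binom(n,i)_ζ`, i.e. the evaluation at `ζ`
of the Gaussian binomial polynomial, defined via the `q`-Pascal recursion
`binom(n+1,i+1)_ζ = ζ^(i+1)·binom(n,i+1)_ζ + binom(n,i)_ζ`. -/
def qBinom {k : Type*} [Field k] (ζ : k) : ℕ → ℕ → k
  | _, 0 => 1
  | 0, _ + 1 => 0
  | n + 1, i + 1 => ζ ^ (i + 1) * qBinom ζ n (i + 1) + qBinom ζ n i

/-- The iterated `q`-commutator `[⋯[[a,b]_q, b]_{qζ} ⋯, b]_{qζ^{m-1}}`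
with `m` occurrences of `b`. -/
def qCommIterRight {k A : Type*} [Field k] [Ring A] [Algebra k A]
    (q ζ : k) (a b : A) : ℕ → A
  | 0 => a
  | m + 1 => qComm (q * ζ ^ m) (qCommIterRight q ζ a b m) b

lemma qBinom_zero_right {k : Type*} [Field k] (ζ : k) (n : ℕ) : qBinom ζ n 0 = 1 := by
  cases n <;> rfl

lemma qBinom_eq_zero {k : Type*} [Field k] (ζ : k) {n i : ℕ} (h : n < i) :
    qBinom ζ n i = 0 := by
  induction n generalizing i with
  | zero =>
    obtain ⟨j, rfl⟩ : ∃ j, i = j + 1 := ⟨i - 1, by omega⟩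
    rfl
  | succ n ih =>
    obtain ⟨j, rfl⟩ : ∃ j, i = j + 1 := ⟨i - 1, by omega⟩
    show ζ ^ (j + 1) * qBinom ζ n (j + 1) + qBinom ζ n j = 0
    rw [ih (by omega), ih (by omega), mul_zero, zero_add]

lemma qBinom_self {k : Type*} [Field k] (ζ : k) (n : ℕ) : qBinom ζ n n = 1 := by
  induction n with
  | zero => rfl
  | succ n ih =>
    show ζ ^ (n + 1) * qBinom ζ n (n + 1) + qBinom ζ n n = 1
    rw [qBinom_eq_zero ζ (by omega), ih, mul_zero, zero_add]

lemma qBinom_succ_succ' {k : Type*} [Field k] (ζ : k) (n i : ℕ) :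
    qBinom ζ (n + 1) (i + 1) = qBinom ζ n (i + 1) + ζ ^ (n - i) * qBinom ζ n i := by
  induction n generalizing i with
  | zero =>
    cases i with
    | zero => simp [qBinom]
    | succ j =>
      rw [qBinom_eq_zero ζ (by omega), qBinom_eq_zero ζ (by omega),
        qBinom_eq_zero ζ (by omega)]
      ring
  | succ n ih =>
    rcases lt_trichotomy i (n + 1) with h | h | h
    · cases i with
      | zero =>
        show ζ ^ 1 * qBinom ζ (n + 1) 1 + qBinom ζ (n + 1) 0
            = qBinom ζ (n + 1) 1 + ζ ^ (n + 1 - 0) * qBinom ζ (n + 1) 0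
        rw [qBinom_zero_right]
        have edef : qBinom ζ (n + 1) 1 = ζ ^ 1 * qBinom ζ n 1 + 1 := by
          show ζ ^ (0 + 1) * qBinom ζ n (0 + 1) + qBinom ζ n 0 = _
          rw [qBinom_zero_right]
        have ih0 := ih 0
        rw [qBinom_zero_right, Nat.sub_zero] at ih0
        simp only [Nat.sub_zero, mul_one]
        linear_combination ζ * ih0 - edef
      | succ j =>
        obtain ⟨m, rfl⟩ : ∃ m, n = j + m + 1 := ⟨n - j - 1, by omega⟩
        have e2 : qBinom ζ (j + m + 1 + 1) (j + 2)
            = ζ ^ (j + 2) * qBinom ζ (j + m + 1) (j + 2) + qBinom ζ (j + m + 1) (j + 1) := rfl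
        have e1 : qBinom ζ (j + m + 1 + 1) (j + 1)
            = ζ ^ (j + 1) * qBinom ζ (j + m + 1) (j + 1) + qBinom ζ (j + m + 1) j := rfl
        have ih1 := ih (j + 1)
        have ih0 := ih j
        have a1 : j + m + 1 - (j + 1) = m := by omega
        have a0 : j + m + 1 - j = m + 1 := by omega
        rw [a1] at ih1
        rw [a0] at ih0
        show ζ ^ (j + 2) * qBinom ζ (j + m + 1 + 1) (j + 2) + qBinom ζ (j + m + 1 + 1) (j + 1)
            = qBinom ζ (j + m + 1 + 1) (j + 2)
              + ζ ^ (j + m + 1 + 1 - (j + 1)) * qBinom ζ (j + m + 1 + 1) (j + 1)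
        rw [show j + m + 1 + 1 - (j + 1) = m + 1 by omega]
        linear_combination ζ ^ (j + 2) * ih1 + ih0 - e2 - ζ ^ (m + 1) * e1
    · subst h
      rw [qBinom_self, qBinom_eq_zero ζ (by omega), qBinom_self]
      simp
    · rw [qBinom_eq_zero ζ (by omega), qBinom_eq_zero ζ (by omega),
        qBinom_eq_zero ζ (by omega)]
      ring

/-- The `q`-Leibniz formula. -/
theorem qComm_pow_right {k A : Type*} [Field k] [Ring A] [Algebra k A]
    (a b : A) (q ζ : k) (r : ℕ) (hr : 1 ≤ r) :
    qComm (q ^ r) a (b ^ r) =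
      ∑ i ∈ Finset.range r,
        (q ^ i * qBinom ζ r i) • (b ^ i * qCommIterRight q ζ a b (r - i)) := by
  obtain ⟨n, rfl⟩ : ∃ n, r = n + 1 := ⟨r - 1, by omega⟩
  clear hr
  induction n with
  | zero =>
    simp [qComm, qCommIterRight, qBinom_zero_right]
  | succ n ih =>
    set c : ℕ → A := qCommIterRight q ζ a b with hc
    have key : qComm (q ^ (n + 2)) a (b ^ (n + 2))
        = qComm (q ^ (n + 1)) a (b ^ (n + 1)) * b
          + (q ^ (n + 1)) • (b ^ (n + 1) * qComm q a b) := by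
      simp only [qComm, sub_mul, mul_sub, smul_mul_assoc, mul_smul_comm, smul_sub, smul_smul,
        pow_succ, mul_assoc]
      abel
    rw [key, ih, Finset.sum_mul]
    have expand : ∀ i ∈ Finset.range (n + 1),
        (q ^ i * qBinom ζ (n + 1) i) • (b ^ i * c (n + 1 - i)) * b
          = (q ^ i * qBinom ζ (n + 1) i) • (b ^ i * c (n + 2 - i))
            + (q ^ (i + 1) * (ζ ^ (n + 1 - i) * qBinom ζ (n + 1) i))
              • (b ^ (i + 1) * c (n + 1 - i)) := by
      intro i hi
      have hi' : i ≤ n := by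
        have := Finset.mem_range.mp hi; omega
      obtain ⟨d, rfl⟩ : ∃ d, n = i + d := ⟨n - i, by omega⟩
      rw [show i + d + 1 - i = d + 1 by omega, show i + d + 2 - i = d + 2 by omega]
      have hrec : c (d + 2) = c (d + 1) * b - (q * ζ ^ (d + 1)) • (b * c (d + 1)) := rfl
      rw [hrec]
      simp only [mul_sub, smul_sub, smul_smul, mul_smul_comm, smul_mul_assoc, pow_succ,
        mul_assoc]
      module
    rw [Finset.sum_congr rfl expand, Finset.sum_add_distrib]
    conv_rhs => rw [Finset.sum_range_succ']
    have rhs_term : ∀ i ∈ Finset.range (n + 1),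
        (q ^ (i + 1) * qBinom ζ (n + 1 + 1) (i + 1)) • (b ^ (i + 1) * c (n + 1 + 1 - (i + 1)))
          = (q ^ (i + 1) * qBinom ζ (n + 1) (i + 1)) • (b ^ (i + 1) * c (n + 1 - i))
            + (q ^ (i + 1) * (ζ ^ (n + 1 - i) * qBinom ζ (n + 1) i))
              • (b ^ (i + 1) * c (n + 1 - i)) := by
      intro i hi
      rw [show n + 1 + 1 - (i + 1) = n + 1 - i by omega, qBinom_succ_succ' ζ (n + 1) i,
        mul_add, add_smul]
    rw [Finset.sum_congr rfl rhs_term, Finset.sum_add_distrib]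
    rw [Finset.sum_range_succ'
        (fun i => (q ^ i * qBinom ζ (n + 1) i) • (b ^ i * c (n + 2 - i))) n,
      Finset.sum_range_succ
        (fun i => (q ^ (i + 1) * qBinom ζ (n + 1) (i + 1)) • (b ^ (i + 1) * c (n + 1 - i))) n]
    have sumeq : (∑ i ∈ Finset.range n,
          (q ^ (i + 1) * qBinom ζ (n + 1) (i + 1)) • (b ^ (i + 1) * c (n + 2 - (i + 1))))
        = ∑ i ∈ Finset.range n,
          (q ^ (i + 1) * qBinom ζ (n + 1) (i + 1)) • (b ^ (i + 1) * c (n + 1 - i)) := by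
      refine Finset.sum_congr rfl fun i hi => ?_
      rw [show n + 2 - (i + 1) = n + 1 - i by omega]
    have hA0 : (q ^ 0 * qBinom ζ (n + 1) 0) • (b ^ 0 * c (n + 2 - 0))
        = (q ^ 0 * qBinom ζ (n + 1 + 1) 0) • (b ^ 0 * c (n + 1 + 1 - 0)) := by
      rw [qBinom_zero_right, qBinom_zero_right]
    have hX : q ^ (n + 1) • (b ^ (n + 1) * qComm q a b)
        = (q ^ (n + 1) * qBinom ζ (n + 1) (n + 1)) • (b ^ (n + 1) * c (n + 1 - n)) := by
      rw [qBinom_self, mul_one, show n + 1 - n = 1 by omega]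
      have : c 1 = qComm (q * ζ ^ 0) a b := rfl
      rw [this, pow_zero, mul_one]
    rw [sumeq, hA0, hX]
    abel
end

section
/- Restricted q-Leibniz formula: let k be a field of characteristic 0, A an associative k-algebra, a, b in A, q in k, and ζ in k a root of unity of multiplicative order exactly r. Then [a, b^r]_{q^r} = [⋯[[a,b]_q, b]_{qζ} ⋯, b]_{qζ^{r-1}}, the iterated q-commutator with r occurrences of b. -/
/-!
Left and right multiplication `L`, `R` by `b` commute, and `[x, b]_s = (R - s L) x`. Hence the
iterated commutator is `∏_{j<r} (R - q ζ^j L)` applied to `a`, while `[a, b^r]_{q^r}` is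
`(R^r - q^r L^r) a`. Since `ζ` is a primitive `r`-th root of unity,
`∏_{j<r} (Y - ζ^j q X) = Y^r - q^r X^r` in the domain `k[X][Y]`; evaluate at `X = L`, `Y = R`.
-/

open Polynomial Finset

theorem IsPrimitiveRoot.prod_range_sub_pow_mul_eq_pow_sub_pow {R : Type*} [CommRing R]
    [IsDomain R] {ζ : R} {n : ℕ} (h : IsPrimitiveRoot ζ n) (hn : 0 < n) (x y : R) :
    ∏ j ∈ range n, (x - ζ ^ j * y) = x ^ n - y ^ n := by
  rw [h.pow_sub_pow_eq_prod_sub_mul x y hn]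
  refine prod_nbij (ζ ^ ·) (fun j _ => ?_) (fun i hi j hj => h.injOn_pow hi hj) (fun μ hμ => ?_)
    fun _ _ => rfl
  · rw [Polynomial.mem_nthRootsFinset hn, ← pow_mul, mul_comm, pow_mul, h.pow_eq_one, one_pow]
  · have := NeZero.of_pos hn
    obtain ⟨j, hj, rfl⟩ := h.eq_pow_of_pow_eq_one ((Polynomial.mem_nthRootsFinset hn 1).1 hμ)
    exact ⟨j, mem_range.2 hj, rfl⟩

section LeftRight

variable {k A : Type*} [Field k] [Ring A] [Algebra k A]

noncomputable def mulLeftRightAeval (b : A) : k[X][X] →ₐ[k] Module.End k A :=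
  eval₂AlgHom (aeval (LinearMap.mulLeft k b)) (LinearMap.mulRight k b) fun _ =>
    (Algebra.commute_of_mem_adjoin_singleton_of_commute (aeval_mem_adjoin_singleton k _)
      (LinearMap.commute_mulLeft_right b b).symm).symm

@[simp]
theorem mulLeftRightAeval_X (b : A) : mulLeftRightAeval b (X : k[X][X]) = LinearMap.mulRight k b :=
  eval₂_X _ _

@[simp]
theorem mulLeftRightAeval_C (b : A) (p : k[X]) :
    mulLeftRightAeval b (C p) = aeval (LinearMap.mulLeft k b) p :=
  eval₂_C _ _

theorem mulLeftRightAeval_X_sub_smul_C_X_apply (b : A) (s : k) (x : A) :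
    mulLeftRightAeval b (X - s • C X : k[X][X]) x = qComm s x b := by
  simp [qComm]

theorem qCommIterRight_eq_mulLeftRightAeval (q ζ : k) (a b : A) (m : ℕ) :
    qCommIterRight q ζ a b m =
      mulLeftRightAeval b (∏ j ∈ range m, (X - (q * ζ ^ j) • C X : k[X][X])) a := by
  induction m with
  | zero => simp [qCommIterRight]
  | succ m ih =>
    rw [prod_range_succ, mul_comm, map_mul, Module.End.mul_apply, ← ih,
      mulLeftRightAeval_X_sub_smul_C_X_apply]
    rfl

theorem qComm_pow_eq_mulLeftRightAeval (s : k) (a b : A) (r : ℕ) :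
    qComm (s ^ r) a (b ^ r) = mulLeftRightAeval b (X ^ r - (s • C X) ^ r : k[X][X]) a := by
  simp [qComm, _root_.smul_pow]

end LeftRight

theorem qComm_pow_right_of_orderOf_general {k A : Type*} [Field k]
    [Ring A] [Algebra k A] (a b : A) (q ζ : k) (r : ℕ) (hr : 1 ≤ r)
    (hζ : orderOf ζ = r) :
    qComm (q ^ r) a (b ^ r) = qCommIterRight q ζ a b r := by
  have hprim : IsPrimitiveRoot (algebraMap k k[X][X] ζ) r :=
    (hζ ▸ IsPrimitiveRoot.orderOf ζ).map_of_injective (algebraMap k _).injective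
  have hfactor : ∀ j, (X - (q * ζ ^ j) • C X : k[X][X]) =
      X - algebraMap k k[X][X] ζ ^ j * (q • C X) := by
    intro j
    rw [← map_pow, ← Algebra.smul_def, smul_smul, mul_comm]
  rw [qCommIterRight_eq_mulLeftRightAeval, prod_congr rfl fun j _ => hfactor j,
    hprim.prod_range_sub_pow_mul_eq_pow_sub_pow hr, qComm_pow_eq_mulLeftRightAeval]

/-- The restricted `q`-Leibniz formula in characteristic `0`: if `ζ` has multiplicative
order exactly `r`, then `[a, b^r]_{q^r} = [⋯[[a,b]_q, b]_{qζ} ⋯, b]_{qζ^{r-1}}`. -/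
theorem qComm_pow_right_of_orderOf {k A : Type*} [Field k] [CharZero k]
    [Ring A] [Algebra k A] (a b : A) (q ζ : k) (r : ℕ) (hr : 1 ≤ r)
    (hζ : orderOf ζ = r) :
    qComm (q ^ r) a (b ^ r) = qCommIterRight q ζ a b r :=
  qComm_pow_right_of_orderOf_general a b q ζ r hr hζ
end
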